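/- Translation of a single OR gate into binary clauses is correct for unit propagation: let φ be a CNF formula, let w₁,…,w_m be literals and u a positive literal on a fresh variable not occurring in φ, and let ψ = φ ∪ {{¬wᵢ, u} : 1 ≤ i ≤ m}. Then u is derivable from ψ by unit propagation if and only if at least one of w₁,…,w_m is derivable from φ. -/

import Mathlib

/-- A literal is a propositional variable paired with a polarity. -/
abbrev Lit (V : Type*) := V × Bool

/-- The complement of a literal. -/
def Lit.neg {V : Type*} (l : Lit V) : Lit V := (l.1, !l.2)

/-- A clause is a finite set of literals. -/
abbrev Clause (V : Type*) := Finset (Lit V)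

/-- A CNF formula is a finite set of clauses. -/
abbrev CNF (V : Type*) := Finset (Clause V)

/-- A literal is true under a complete assignment. -/
def litTrue {V : Type*} (A : V → Bool) (l : Lit V) : Prop := A l.1 = l.2

/-- A clause is satisfied if some literal in it is true. -/
def satClause {V : Type*} (A : V → Bool) (c : Clause V) : Prop := ∃ l ∈ c, litTrue A l

/-- A CNF formula is satisfied if every clause is satisfied. -/
def satCNF {V : Type*} (A : V → Bool) (φ : CNF V) : Prop := ∀ c ∈ φ, satClause A c

/-- Derivability of a literal by unit propagation: `w` is derivable if some clause
`{l₁,…,l_q,w} ∈ φ` has the complements of all the `lᵢ` derivable. -/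
inductive UPDeriv {V : Type*} (φ : CNF V) : Lit V → Prop
  | step (c : Clause V) (w : Lit V) (hc : c ∈ φ) (hw : w ∈ c)
      (h : ∀ l ∈ c, l ≠ w → UPDeriv φ (Lit.neg l)) : UPDeriv φ w

/-! The clauses `¬wᵢ ∨ u` make `u` derivable as soon as some `wᵢ` is. Conversely, no clause of
`ψ` contains `¬u`, so `¬u` is never derived and the new clauses can only fire towards `u`. Hence a
derivation from `ψ` of a literal over another variable never uses them, and a derivation of `u` must
end with some `¬wᵢ ∨ u`, fed by a derivation of `wᵢ` from `φ` alone. -/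

namespace Lit

variable {V : Type*}

@[simp]
lemma neg_neg (l : Lit V) : l.neg.neg = l := by
  simp [Lit.neg]

@[simp]
lemma fst_neg (l : Lit V) : l.neg.1 = l.1 := rfl

end Lit

namespace UPDeriv

variable {V : Type*} {φ ψ : CNF V}

lemma mono (hsub : φ ⊆ ψ) {l : Lit V} (hd : UPDeriv φ l) : UPDeriv ψ l := by
  induction hd with
  | step c w hc hw _ ih => exact .step c w (hsub hc) hw ih

lemma exists_mem {l : Lit V} : UPDeriv φ l → ∃ c ∈ φ, l ∈ c
  | .step c _ hc hw _ => ⟨c, hc, hw⟩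

lemma of_pair_mem [DecidableEq V] {w m : Lit V} (hc : {w.neg, m} ∈ φ) (hw : UPDeriv φ w) :
    UPDeriv φ m := by
  refine .step _ m hc (by simp) fun l hl hlm => ?_
  rcases Finset.mem_insert.1 hl with rfl | hl
  · simpa using hw
  · exact absurd (Finset.mem_singleton.1 hl) hlm

lemma of_union_of_fresh [DecidableEq V] {u : V} (hφ : ∀ c ∈ φ, ∀ l ∈ c, l.1 ≠ u)
    (hψ_pos : ∀ c ∈ ψ, (u, true) ∈ c) (hψ_neg : ∀ c ∈ ψ, (u, false) ∉ c) {l : Lit V}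
    (hd : UPDeriv (φ ∪ ψ) l) (hl : l.1 ≠ u) : UPDeriv φ l := by
  have not_neg : ¬ UPDeriv (φ ∪ ψ) (u, false) := fun h => by
    obtain ⟨c, hc, hmem⟩ := h.exists_mem
    rcases Finset.mem_union.1 hc with hc | hc
    · exact hφ c hc _ hmem rfl
    · exact hψ_neg c hc hmem
  induction hd with
  | step c w hc hw h ih =>
    rcases Finset.mem_union.1 hc with hc | hc
    · exact .step c w hc hw fun l' hl' hne => ih l' hl' hne (hφ c hc l' hl')
    · have hne : ((u, true) : Lit V) ≠ w := fun e => hl (e ▸ rfl)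
      exact absurd (h _ (hψ_pos c hc) hne) not_neg

end UPDeriv

section OrGate

variable {V : Type*} [DecidableEq V]

def orClauses (ws : Finset (Lit V)) (u : V) : CNF V :=
  ws.image fun w => {w.neg, (u, true)}

lemma mem_orClauses {ws : Finset (Lit V)} {u : V} {c : Clause V} :
    c ∈ orClauses ws u ↔ ∃ w ∈ ws, {w.neg, (u, true)} = c :=
  Finset.mem_image

lemma pos_mem_of_mem_orClauses {ws : Finset (Lit V)} {u : V} {c : Clause V}
    (hc : c ∈ orClauses ws u) : (u, true) ∈ c := by
  obtain ⟨w, -, rfl⟩ := mem_orClauses.1 hc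
  simp

lemma neg_not_mem_of_mem_orClauses {ws : Finset (Lit V)} {u : V} (hws : ∀ w ∈ ws, w.1 ≠ u)
    {c : Clause V} (hc : c ∈ orClauses ws u) : (u, false) ∉ c := by
  obtain ⟨w, hw, rfl⟩ := mem_orClauses.1 hc
  simp only [Finset.mem_insert, Finset.mem_singleton, Prod.mk.injEq, Bool.false_eq_true,
    and_false, or_false]
  exact fun e => hws w hw (by rw [← Lit.fst_neg, ← e])

end OrGate

/-- Translation of an OR gate into binary clauses is correct for unit propagation:
with u fresh, u is derivable from φ ∪ {{¬wᵢ,u} : i} iff some wᵢ is derivable from φ. -/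
theorem or_gate_correct {V : Type*} [DecidableEq V] (φ : CNF V)
    (ws : Finset (Lit V)) (u : V)
    (hfresh : ∀ c ∈ φ, ∀ l ∈ c, l.1 ≠ u) (hws : ∀ w ∈ ws, w.1 ≠ u) :
    UPDeriv (φ ∪ ws.image (fun w => ({Lit.neg w, ((u, true) : Lit V)} : Clause V)))
        (u, true) ↔
      ∃ w ∈ ws, UPDeriv φ w := by
  change UPDeriv (φ ∪ orClauses ws u) (u, true) ↔ _
  constructor
  · rintro ⟨c, _, hc, hu, hprem⟩
    rcases Finset.mem_union.1 hc with hc | hc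
    · exact absurd rfl (hfresh c hc _ hu)
    obtain ⟨w, hw, rfl⟩ := mem_orClauses.1 hc
    have hne : w.neg ≠ (u, true) := fun e => hws w hw (by rw [← Lit.fst_neg, e])
    have hderiv : UPDeriv (φ ∪ orClauses ws u) w := by simpa using hprem _ (by simp) hne
    exact ⟨w, hw, hderiv.of_union_of_fresh hfresh (fun _ => pos_mem_of_mem_orClauses)
      (fun _ => neg_not_mem_of_mem_orClauses hws) (hws w hw)⟩
  · rintro ⟨w, hw, hd⟩
    exact UPDeriv.of_pair_mem (Finset.mem_union_right _ (mem_orClauses.2 ⟨w, hw, rfl⟩))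
      (hd.mono Finset.subset_union_left)
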